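/- arXiv:2203.09751 — 4 statements merged into one kernel-verified Lean document; each statement's English description precedes it below -/
import Mathlib

section
/- For all real a and b, the integral over ℝ of Φ(a + b·x)·φ(x) dx equals Φ(a / √(1 + b²)), where Φ is the standard normal CDF and φ the standard normal density. -/
open MeasureTheory Real

/-- Standard normal density. -/
noncomputable def stdPdf (x : ℝ) : ℝ := (Real.sqrt (2 * Real.pi))⁻¹ * Real.exp (-x ^ 2 / 2)

/-- Standard normal CDF. -/
noncomputable def stdCdf (t : ℝ) : ℝ := ∫ s in Set.Iic t, stdPdf s

/-- Owen's T function. -/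
noncomputable def owenT (h a : ℝ) : ℝ :=
  (2 * Real.pi)⁻¹ * ∫ x in (0:ℝ)..a, Real.exp (-h ^ 2 * (1 + x ^ 2) / 2) / (1 + x ^ 2)

/-- Standard bivariate normal density with correlation ρ. -/
noncomputable def bvnPdf (ρ x y : ℝ) : ℝ :=
  Real.exp (-(x ^ 2 - 2 * ρ * x * y + y ^ 2) / (2 * (1 - ρ ^ 2))) /
    (2 * Real.pi * Real.sqrt (1 - ρ ^ 2))

/-- Standard bivariate normal CDF with correlation ρ. -/
noncomputable def bvn (u v ρ : ℝ) : ℝ :=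
  ∫ p : ℝ × ℝ in Set.Iic u ×ˢ Set.Iic v, bvnPdf ρ p.1 p.2

/-- General bivariate Gaussian density with means μ₁ μ₂, std devs σ₁ σ₂, covariance σ₁₂. -/
noncomputable def biGaussPdf (μ₁ μ₂ σ₁ σ₂ σ₁₂ x y : ℝ) : ℝ :=
  Real.exp (-(σ₂ ^ 2 * (x - μ₁) ^ 2 - 2 * σ₁₂ * (x - μ₁) * (y - μ₂) + σ₁ ^ 2 * (y - μ₂) ^ 2) /
      (2 * (σ₁ ^ 2 * σ₂ ^ 2 - σ₁₂ ^ 2))) /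
    (2 * Real.pi * Real.sqrt (σ₁ ^ 2 * σ₂ ^ 2 - σ₁₂ ^ 2))

/-! If `X` and `Y` are independent standard Gaussians, averaging `Φ(a + b x)` against the law of `X`
gives `P(Y ≤ a + b X) = P(Y - b X ≤ a)`. The law of `Y - b X` is the convolution of `N(0, b²)` and
`N(0, 1)`, i.e. `N(0, 1 + b²)`, whose distribution function at `a` is `Φ(a / √(1 + b²))`. -/

open ProbabilityTheory Set
open scoped NNReal

theorem MeasureTheory.Measure.integral_measureReal_prodMk_left {α β : Type*} [MeasurableSpace α]
    [MeasurableSpace β] (μ : Measure α) (ν : Measure β) [IsFiniteMeasure ν]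
    {s : Set (α × β)} (hs : MeasurableSet s) :
    ∫ x, ν.real (Prod.mk x ⁻¹' s) ∂μ = (μ.prod ν).real s := by
  simp_rw [measureReal_def, Measure.prod_apply hs]
  exact integral_toReal (measurable_measure_prodMk_left hs).aemeasurable
    (ae_of_all _ fun _ => measure_lt_top _ _)

theorem integral_measureReal_Iic_add_mul (μ ν : Measure ℝ) [SFinite μ] [IsFiniteMeasure ν]
    (a b : ℝ) :
    ∫ x, ν.real (Iic (a + b * x)) ∂μ = (μ.map (-b * ·) ∗ ν).real (Iic a) := by
  have hf : Measurable (-b * · : ℝ → ℝ) := measurable_const_mul _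
  have hconv : μ.map (-b * ·) ∗ ν = (μ.prod ν).map (fun p => -b * p.1 + p.2) := by
    rw [Measure.conv, ← Measure.map_id (μ := ν), Measure.map_prod_map _ _ hf measurable_id,
      Measure.map_map measurable_add (hf.prodMap measurable_id), Measure.map_id]
    rfl
  have hs : MeasurableSet {p : ℝ × ℝ | -b * p.1 + p.2 ≤ a} :=
    measurableSet_le (by fun_prop) measurable_const
  have hsection (x : ℝ) : Prod.mk x ⁻¹' {p : ℝ × ℝ | -b * p.1 + p.2 ≤ a} = Iic (a + b * x) := by
    ext y
    simp only [mem_preimage, mem_ofPred_eq, mem_Iic]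
    constructor <;> intro h <;> linarith
  rw [hconv, map_measureReal_apply (by fun_prop) measurableSet_Iic]
  simp_rw [← hsection]
  exact Measure.integral_measureReal_prodMk_left μ ν hs

theorem stdPdf_eq_gaussianPDFReal : stdPdf = gaussianPDFReal 0 1 := by
  ext x
  simp [stdPdf, gaussianPDFReal]

theorem stdCdf_eq_gaussianReal_real_Iic (t : ℝ) : stdCdf t = (gaussianReal 0 1).real (Iic t) := by
  rw [measureReal_def, gaussianReal_apply_eq_integral 0 one_ne_zero, ENNReal.toReal_ofReal
    (setIntegral_nonneg measurableSet_Iic fun x _ => gaussianPDFReal_nonneg 0 1 x),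
    ← stdPdf_eq_gaussianPDFReal, stdCdf]

theorem gaussianReal_real_Iic {v : ℝ≥0} (hv : v ≠ 0) (a : ℝ) :
    (gaussianReal 0 v).real (Iic a) = stdCdf (a / √v) := by
  have hc : 0 < √(v : ℝ) := by positivity
  have hmap : (gaussianReal 0 1).map (√(v : ℝ) * ·) = gaussianReal 0 v := by
    rw [gaussianReal_map_const_mul]
    congr 1
    · ring
    · ext; simp
  have hpre : (√(v : ℝ) * ·) ⁻¹' Iic a = Iic (a / √v) := by
    ext x
    simp [le_div_iff₀ hc, mul_comm]
  rw [← hmap, map_measureReal_apply (by fun_prop) measurableSet_Iic, hpre,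
    stdCdf_eq_gaussianReal_real_Iic]

theorem stmt_0 (a b : ℝ) :
    ∫ x : ℝ, stdCdf (a + b * x) * stdPdf x = stdCdf (a / Real.sqrt (1 + b ^ 2)) := by
  calc ∫ x, stdCdf (a + b * x) * stdPdf x
      = ∫ x, (gaussianReal 0 1).real (Iic (a + b * x)) ∂gaussianReal 0 1 := by
        simp_rw [integral_gaussianReal_eq_integral_smul one_ne_zero, stdCdf_eq_gaussianReal_real_Iic,
          stdPdf_eq_gaussianPDFReal, smul_eq_mul, mul_comm]
    _ = ((gaussianReal 0 1).map (-b * ·) ∗ gaussianReal 0 1).real (Iic a) :=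
        integral_measureReal_Iic_add_mul _ _ a b
    _ = (gaussianReal 0 (.mk ((-b) ^ 2) (sq_nonneg _) * 1 + 1)).real (Iic a) := by
        rw [gaussianReal_map_const_mul, gaussianReal_conv_gaussianReal, mul_zero, zero_add]
    _ = stdCdf (a / √(1 + b ^ 2)) := by
        rw [gaussianReal_real_Iic (by positivity)]
        congr
        push_cast
        ring
end

section
/- For all real a, b, h, k, ∫_{-∞}^{∞} Φ(a + b x) Φ(h + k x) φ(x) dx = BvN(a/√(1+b²), h/√(1+k²); b k / (√(1+b²)·√(1+k²))), where BvN(·,·;ρ) is the standard bivariate normal CDF with correlation ρ. -/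
open MeasureTheory Real
open scoped ENNReal

open Set

section Aux

lemma continuous_stdPdf : Continuous stdPdf := by unfold stdPdf; fun_prop

lemma integrable_stdPdf : Integrable stdPdf := by
  have h : stdPdf = fun x : ℝ => (Real.sqrt (2*π))⁻¹ * Real.exp (-(1/2:ℝ)*x^2) := by
    funext x; unfold stdPdf; ring_nf
  rw [h]
  exact (integrable_exp_neg_mul_sq (by norm_num)).const_mul _

lemma gauss_int (d e c : ℝ) (hd : 0 < d) :
    ∫ x : ℝ, Real.exp (-(d*x^2 + 2*e*x + c)/2) =
      Real.sqrt (2*π/d) * Real.exp (-(c - e^2/d)/2) := by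
  have key : ∀ x : ℝ, -(d*x^2 + 2*e*x + c)/2 = -(d/2)*(x + e/d)^2 + (-(c - e^2/d)/2) := by
    intro x; field_simp; ring
  simp_rw [key, Real.exp_add]
  rw [integral_mul_const]
  rw [integral_add_right_eq_self (fun x : ℝ => Real.exp (-(d/2)*x^2)) (e/d)]
  rw [integral_gaussian]
  congr 2
  field_simp

lemma stdCdf_add (t c : ℝ) : stdCdf (t + c) = ∫ y in Iic t, stdPdf (y + c) := by
  unfold stdCdf
  rw [← integral_indicator measurableSet_Iic, ← integral_indicator measurableSet_Iic]
  rw [← integral_add_right_eq_self (fun y => (Iic (t+c)).indicator stdPdf y) c]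
  congr 1; funext y
  by_cases hy : y ≤ t
  · rw [indicator_of_mem (by simpa using hy), indicator_of_mem (by simp; linarith)]
  · rw [indicator_of_notMem (by simpa using hy), indicator_of_notMem (by simp; linarith)]

lemma xint (b k y z : ℝ) :
    ∫ x : ℝ, stdPdf (y + b*x) * stdPdf (z + k*x) * stdPdf x =
      biGaussPdf 0 0 (Real.sqrt (1+b^2)) (Real.sqrt (1+k^2)) (b*k) y z := by
  have hD : (0:ℝ) < 1 + b^2 + k^2 := by positivity
  have h1 : ∀ x : ℝ, stdPdf (y + b*x) * stdPdf (z + k*x) * stdPdf x =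
      ((Real.sqrt (2*π))⁻¹)^3 *
        Real.exp (-((1+b^2+k^2)*x^2 + 2*(b*y+k*z)*x + (y^2+z^2))/2) := by
    intro x
    have e : -(y + b*x)^2/2 + (-(z + k*x)^2/2 + -x^2/2)
        = -((1+b^2+k^2)*x^2 + 2*(b*y+k*z)*x + (y^2+z^2))/2 := by ring
    calc stdPdf (y+b*x) * stdPdf (z+k*x) * stdPdf x
        = ((Real.sqrt (2*π))⁻¹)^3 * (Real.exp (-(y+b*x)^2/2) *
            (Real.exp (-(z+k*x)^2/2) * Real.exp (-x^2/2))) := by unfold stdPdf; ring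
      _ = _ := by rw [← Real.exp_add, ← Real.exp_add, e]
  simp_rw [h1]
  rw [integral_const_mul, gauss_int _ _ _ hD]
  unfold biGaussPdf
  have hsb : (Real.sqrt (1+b^2))^2 = 1+b^2 := Real.sq_sqrt (by positivity)
  have hsk : (Real.sqrt (1+k^2))^2 = 1+k^2 := Real.sq_sqrt (by positivity)
  rw [hsb, hsk]
  have hDD : (1+b^2)*(1+k^2) - (b*k)^2 = 1+b^2+k^2 := by ring
  rw [hDD]
  have h2π : Real.sqrt (2*π) ^ 2 = 2*π := Real.sq_sqrt (by positivity)
  have hsπ : (0:ℝ) < Real.sqrt (2*π) := Real.sqrt_pos.mpr (by positivity)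
  have hsD : (0:ℝ) < Real.sqrt (1+b^2+k^2) := Real.sqrt_pos.mpr hD
  have hsqd : Real.sqrt (2*π/(1+b^2+k^2)) = Real.sqrt (2*π) / Real.sqrt (1+b^2+k^2) :=
    Real.sqrt_div (by positivity) _
  rw [hsqd]
  have hexp : -((y^2+z^2) - (b*y+k*z)^2/(1+b^2+k^2))/2 =
      -((1+k^2)*(y-0)^2 - 2*(b*k)*(y-0)*(z-0) + (1+b^2)*(z-0)^2)/(2*(1+b^2+k^2)) := by
    field_simp; ring
  rw [hexp]
  conv_rhs => rw [← h2π]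
  field_simp

def shearEquiv (b k : ℝ) : (ℝ × (ℝ × ℝ)) ≃ᵐ (ℝ × (ℝ × ℝ)) where
  toFun p := (p.1, (p.2.1 + b * p.1, p.2.2 + k * p.1))
  invFun p := (p.1, (p.2.1 - b * p.1, p.2.2 - k * p.1))
  left_inv p := by simp
  right_inv p := by simp
  measurable_toFun := by
    show Measurable fun p : ℝ × (ℝ × ℝ) => (p.1, (p.2.1 + b * p.1, p.2.2 + k * p.1))
    fun_prop
  measurable_invFun := by
    show Measurable fun p : ℝ × (ℝ × ℝ) => (p.1, (p.2.1 - b * p.1, p.2.2 - k * p.1))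
    fun_prop

lemma shear_mp (b k : ℝ) : MeasurePreserving (shearEquiv b k)
    (volume : Measure (ℝ × (ℝ × ℝ))) volume := by
  have h : (volume : Measure (ℝ × (ℝ × ℝ)))
      = (volume : Measure ℝ).prod (volume : Measure (ℝ × ℝ)) := Measure.volume_eq_prod _ _
  rw [h]
  have hm : Measurable (Function.uncurry fun (x : ℝ) (q : ℝ × ℝ) =>
      (q.1 + b * x, q.2 + k * x)) := by fun_prop
  have hae : ∀ᵐ x ∂(volume : Measure ℝ),
      Measure.map (fun q : ℝ × ℝ => (q.1 + b * x, q.2 + k * x)) volume = volume := by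
    refine ae_of_all _ fun x => ?_
    have : (fun q : ℝ × ℝ => (q.1 + b * x, q.2 + k * x)) = fun q : ℝ × ℝ => q + (b*x, k*x) := rfl
    rw [this]
    exact map_add_right_eq_self volume _
  exact (MeasurePreserving.id _).skew_product (g := fun (x : ℝ) (q : ℝ × ℝ) =>
    (q.1 + b * x, q.2 + k * x)) hm hae

lemma integrable_G3 (b k : ℝ) : Integrable
    (fun q : ℝ × (ℝ × ℝ) => stdPdf (q.2.1 + b * q.1) * stdPdf (q.2.2 + k * q.1) * stdPdf q.1) := by
  have base : Integrable (fun q : ℝ × (ℝ × ℝ) => stdPdf q.1 * (stdPdf q.2.1 * stdPdf q.2.2)) := by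
    rw [Measure.volume_eq_prod]
    have inner : Integrable (fun p : ℝ × ℝ => stdPdf p.1 * stdPdf p.2) := by
      rw [Measure.volume_eq_prod]
      exact Integrable.mul_prod integrable_stdPdf integrable_stdPdf
    exact Integrable.mul_prod (f := stdPdf) (g := fun p : ℝ × ℝ => stdPdf p.1 * stdPdf p.2)
      integrable_stdPdf inner
  have heq : (fun q : ℝ × (ℝ × ℝ) =>
        stdPdf (q.2.1 + b * q.1) * stdPdf (q.2.2 + k * q.1) * stdPdf q.1)
      = (fun q : ℝ × (ℝ × ℝ) => stdPdf q.1 * (stdPdf q.2.1 * stdPdf q.2.2)) ∘ (shearEquiv b k) := by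
    funext q; simp [shearEquiv, Function.comp]; ring
  rw [heq]
  exact ((shear_mp b k).integrable_comp_emb (shearEquiv b k).measurableEmbedding).mpr base

lemma smul_prod_meas {α β : Type*} [MeasurableSpace α] [MeasurableSpace β]
    (r : ℝ≥0∞) (μ : Measure α) (ν : Measure β) [SFinite μ] [SFinite ν] :
    (r • μ).prod ν = r • μ.prod ν := by
  ext s hs
  rw [Measure.prod_apply hs, Measure.smul_apply, Measure.prod_apply hs,
    lintegral_smul_measure, smul_eq_mul]

lemma prod_smul_meas {α β : Type*} [MeasurableSpace α] [MeasurableSpace β]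
    (r : ℝ≥0∞) (μ : Measure α) (ν : Measure β) [SFinite μ] [SFinite ν] :
    μ.prod (r • ν) = r • μ.prod ν := by
  ext s hs
  rw [Measure.prod_apply hs, Measure.smul_apply, Measure.prod_apply hs]
  simp_rw [Measure.smul_apply, smul_eq_mul]
  rw [lintegral_const_mul _ (measurable_measure_prodMk_left hs)]

noncomputable def scaleEquiv (c d : ℝ) (hc : c ≠ 0) (hd : d ≠ 0) : (ℝ × ℝ) ≃ᵐ (ℝ × ℝ) where
  toFun p := (c * p.1, d * p.2)
  invFun p := (c⁻¹ * p.1, d⁻¹ * p.2)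
  left_inv p := by simp [inv_mul_cancel_left₀ hc, inv_mul_cancel_left₀ hd]
  right_inv p := by simp [mul_inv_cancel_left₀ hc, mul_inv_cancel_left₀ hd]
  measurable_toFun := by
    show Measurable fun p : ℝ × ℝ => (c * p.1, d * p.2); fun_prop
  measurable_invFun := by
    show Measurable fun p : ℝ × ℝ => (c⁻¹ * p.1, d⁻¹ * p.2); fun_prop

lemma scale_integral {c d : ℝ} (hc : 0 < c) (hd : 0 < d) (G : ℝ × ℝ → ℝ) :
    ∫ p : ℝ × ℝ, G (c * p.1, d * p.2) = (c⁻¹ * d⁻¹) * ∫ p : ℝ × ℝ, G p := by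
  have h1 : ∫ p : ℝ × ℝ, G (c * p.1, d * p.2)
      = ∫ p, G p ∂(Measure.map (scaleEquiv c d hc.ne' hd.ne') volume) := by
    rw [integral_map_equiv]; rfl
  rw [h1]
  have hco : ((scaleEquiv c d hc.ne' hd.ne' : (ℝ×ℝ) ≃ᵐ (ℝ×ℝ)) : ℝ × ℝ → ℝ × ℝ)
      = Prod.map (fun x => c * x) (fun x => d * x) := rfl
  have hmap : Measure.map (scaleEquiv c d hc.ne' hd.ne') (volume : Measure (ℝ × ℝ))
      = (ENNReal.ofReal |c⁻¹| * ENNReal.ofReal |d⁻¹|) • volume := by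
    rw [hco, Measure.volume_eq_prod,
      ← Measure.map_prod_map _ _ (measurable_const_mul c) (measurable_const_mul d),
      Real.map_volume_mul_left hc.ne', Real.map_volume_mul_left hd.ne',
      smul_prod_meas, prod_smul_meas, smul_smul]
  rw [hmap, integral_smul_measure]
  rw [ENNReal.toReal_mul, ENNReal.toReal_ofReal (abs_nonneg _),
    ENNReal.toReal_ofReal (abs_nonneg _), abs_of_pos (inv_pos.2 hc), abs_of_pos (inv_pos.2 hd)]
  rfl

lemma bvn_scale_pdf (S T m y z : ℝ) (hS : 0 < S) (hT : 0 < T)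
    (hD : 0 < S^2*T^2 - m^2) :
    (S*T)⁻¹ * bvnPdf (m/(S*T)) (S⁻¹*y) (T⁻¹*z) = biGaussPdf 0 0 S T m y z := by
  unfold bvnPdf biGaussPdf
  have h1 : 1 - (m/(S*T))^2 = (S^2*T^2 - m^2)/(S*T)^2 := by field_simp
  have h2 : Real.sqrt ((S^2*T^2 - m^2)/(S*T)^2) = Real.sqrt (S^2*T^2 - m^2) / (S*T) := by
    rw [Real.sqrt_div hD.le, Real.sqrt_sq (by positivity)]
  rw [h1, h2]
  have hE : -((S⁻¹*y)^2 - 2*(m/(S*T))*(S⁻¹*y)*(T⁻¹*z) + (T⁻¹*z)^2)/(2*((S^2*T^2-m^2)/(S*T)^2))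
      = -(T^2*(y-0)^2 - 2*m*(y-0)*(z-0) + S^2*(z-0)^2)/(2*(S^2*T^2 - m^2)) := by
    field_simp; ring
  rw [hE]
  have hR : 0 < Real.sqrt (S^2*T^2 - m^2) := Real.sqrt_pos.mpr hD
  field_simp

lemma bvn_eq (a b h k : ℝ) :
    bvn (a / Real.sqrt (1+b^2)) (h / Real.sqrt (1+k^2))
      (b*k/(Real.sqrt (1+b^2)*Real.sqrt (1+k^2)))
    = ∫ p : ℝ × ℝ in Iic a ×ˢ Iic h,
        biGaussPdf 0 0 (Real.sqrt (1+b^2)) (Real.sqrt (1+k^2)) (b*k) p.1 p.2 := by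
  have hsb : 0 < Real.sqrt (1+b^2) := Real.sqrt_pos.mpr (by positivity)
  have hsk : 0 < Real.sqrt (1+k^2) := Real.sqrt_pos.mpr (by positivity)
  have hsb2 : Real.sqrt (1+b^2)^2 = 1+b^2 := Real.sq_sqrt (by positivity)
  have hsk2 : Real.sqrt (1+k^2)^2 = 1+k^2 := Real.sq_sqrt (by positivity)
  have hD : 0 < Real.sqrt (1+b^2)^2 * Real.sqrt (1+k^2)^2 - (b*k)^2 := by
    rw [hsb2, hsk2]; nlinarith [sq_nonneg b, sq_nonneg k, sq_nonneg (b*k)]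
  set G : ℝ × ℝ → ℝ := (Iic (a / Real.sqrt (1+b^2)) ×ˢ Iic (h / Real.sqrt (1+k^2))).indicator
      (fun p => bvnPdf (b*k/(Real.sqrt (1+b^2)*Real.sqrt (1+k^2))) p.1 p.2) with hG
  have hmem : ∀ p : ℝ × ℝ,
      (((Real.sqrt (1+b^2))⁻¹ * p.1, (Real.sqrt (1+k^2))⁻¹ * p.2)
        ∈ Iic (a / Real.sqrt (1+b^2)) ×ˢ Iic (h / Real.sqrt (1+k^2)))
      ↔ p ∈ Iic a ×ˢ Iic h := by
    intro p
    simp only [Set.mem_prod, mem_Iic]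
    constructor
    · rintro ⟨h1, h2⟩
      rw [inv_mul_eq_div, div_le_div_iff_of_pos_right hsb] at h1
      rw [inv_mul_eq_div, div_le_div_iff_of_pos_right hsk] at h2
      exact ⟨h1, h2⟩
    · rintro ⟨h1, h2⟩
      rw [inv_mul_eq_div, div_le_div_iff_of_pos_right hsb]
      rw [inv_mul_eq_div, div_le_div_iff_of_pos_right hsk]
      exact ⟨h1, h2⟩
  unfold bvn
  rw [← integral_indicator (measurableSet_Iic.prod measurableSet_Iic),
    ← integral_indicator (measurableSet_Iic.prod measurableSet_Iic), ← hG]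
  have hscale := scale_integral (inv_pos.2 hsb) (inv_pos.2 hsk) G
  rw [inv_inv, inv_inv] at hscale
  have key : ∫ p : ℝ × ℝ, G p
      = (Real.sqrt (1+b^2) * Real.sqrt (1+k^2))⁻¹
        * ∫ p : ℝ × ℝ, G ((Real.sqrt (1+b^2))⁻¹ * p.1, (Real.sqrt (1+k^2))⁻¹ * p.2) := by
    rw [hscale, ← mul_assoc, mul_inv, mul_mul_mul_comm,
      inv_mul_cancel₀ hsb.ne', inv_mul_cancel₀ hsk.ne', one_mul, one_mul]
  rw [key, ← integral_const_mul]
  congr 1; funext p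
  by_cases hp : p ∈ Iic a ×ˢ Iic h
  · rw [hG, indicator_of_mem ((hmem p).mpr hp), indicator_of_mem hp]
    exact bvn_scale_pdf _ _ _ p.1 p.2 hsb hsk hD
  · rw [hG, indicator_of_notMem (fun hc => hp ((hmem p).mp hc)), indicator_of_notMem hp,
      mul_zero]

end Aux

theorem stmt_2 (a b h k : ℝ) :
    ∫ x : ℝ, stdCdf (a + b * x) * stdCdf (h + k * x) * stdPdf x =
      bvn (a / Real.sqrt (1 + b ^ 2)) (h / Real.sqrt (1 + k ^ 2))
        (b * k / (Real.sqrt (1 + b ^ 2) * Real.sqrt (1 + k ^ 2))) := by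
  have hS : MeasurableSet (Iic a ×ˢ Iic h : Set (ℝ × ℝ)) :=
    measurableSet_Iic.prod measurableSet_Iic
  have step1 : ∀ x : ℝ, stdCdf (a + b * x) * stdCdf (h + k * x) * stdPdf x
      = ∫ p : ℝ × ℝ, (Iic a ×ˢ Iic h).indicator
          (fun p => stdPdf (p.1 + b * x) * stdPdf (p.2 + k * x) * stdPdf x) p := by
    intro x
    rw [stdCdf_add, stdCdf_add, ← setIntegral_prod_mul, ← Measure.volume_eq_prod,
      ← integral_mul_const, ← integral_indicator hS]
  simp_rw [step1]
  have hf : Integrable (Function.uncurry fun (x : ℝ) (p : ℝ × ℝ) =>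
      (Iic a ×ˢ Iic h).indicator
        (fun p => stdPdf (p.1 + b * x) * stdPdf (p.2 + k * x) * stdPdf x) p)
      ((volume : Measure ℝ).prod (volume : Measure (ℝ × ℝ))) := by
    have heq : (Function.uncurry fun (x : ℝ) (p : ℝ × ℝ) =>
        (Iic a ×ˢ Iic h).indicator
          (fun p => stdPdf (p.1 + b * x) * stdPdf (p.2 + k * x) * stdPdf x) p)
        = ((univ : Set ℝ) ×ˢ (Iic a ×ˢ Iic h)).indicator
            (fun q : ℝ × (ℝ × ℝ) =>
              stdPdf (q.2.1 + b * q.1) * stdPdf (q.2.2 + k * q.1) * stdPdf q.1) := by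
      funext q
      rcases q with ⟨x, p⟩
      by_cases hp : p ∈ Iic a ×ˢ Iic h
      · simp [Function.uncurry, Set.indicator, hp]
      · simp [Function.uncurry, Set.indicator, hp]
    rw [heq, ← Measure.volume_eq_prod]
    exact (integrable_G3 b k).indicator (MeasurableSet.univ.prod hS)
  rw [integral_integral_swap hf]
  have step3 : ∀ p : ℝ × ℝ,
      (∫ x : ℝ, (Iic a ×ˢ Iic h).indicator
        (fun p => stdPdf (p.1 + b * x) * stdPdf (p.2 + k * x) * stdPdf x) p)
      = (Iic a ×ˢ Iic h).indicator
          (fun p => biGaussPdf 0 0 (Real.sqrt (1 + b ^ 2)) (Real.sqrt (1 + k ^ 2)) (b * k)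
            p.1 p.2) p := by
    intro p
    by_cases hp : p ∈ Iic a ×ˢ Iic h
    · simp only [indicator_of_mem hp]
      exact xint b k p.1 p.2
    · simp only [indicator_of_notMem hp, integral_zero]
  simp_rw [step3]
  rw [integral_indicator hS]
  exact (bvn_eq a b h k).symm
end

section
/- Owen's T function satisfies T(h, 1) = (1/2)Φ(h)Φ(−h) for all real h, i.e., T(h,1) = (1/2)Φ(h)(1−Φ(h)). -/
open MeasureTheory Real

/-!
Put `G h = ∫₀ʰ exp (-t²/2) dt`, so that `Φ h = 1/2 + G h / √(2π)`. Differentiating under the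
integral sign and substituting `u = h x` gives `∂ₕ T(h, a) = -exp (-h²/2) G (a h) / (2π)`. For
`a = 1` this is the derivative of `-G(h)² / (4π)`, hence `T(h, 1) = T(0, 1) - G(h)² / (4π)` with
`T(0, 1) = arctan 1 / (2π) = 1/8`, and this is `Φ h (1 - Φ h) / 2`.
-/

open Set intervalIntegral

noncomputable def gaussPrimitive (h : ℝ) : ℝ := ∫ t in (0 : ℝ)..h, exp (-t ^ 2 / 2)

lemma continuous_exp_neg_sq_div_two : Continuous fun t : ℝ => exp (-t ^ 2 / 2) := by fun_prop

lemma integrable_exp_neg_sq_div_two : Integrable fun t : ℝ => exp (-t ^ 2 / 2) := by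
  simpa [neg_div, div_eq_inv_mul, mul_comm] using
    integrable_exp_neg_mul_sq (b := 1 / 2) (by norm_num)

lemma hasDerivAt_gaussPrimitive (h : ℝ) : HasDerivAt gaussPrimitive (exp (-h ^ 2 / 2)) h :=
  integral_hasDerivAt_right (continuous_exp_neg_sq_div_two.intervalIntegrable _ _)
    (continuous_exp_neg_sq_div_two.stronglyMeasurableAtFilter _ _)
    continuous_exp_neg_sq_div_two.continuousAt

lemma integral_Iic_zero_exp_neg_sq_div_two :
    ∫ x in Iic (0 : ℝ), exp (-x ^ 2 / 2) = √(2 * π) / 2 := by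
  rw [← neg_zero, ← integral_comp_neg_Ioi]
  simpa [neg_div, div_eq_inv_mul, mul_comm, div_div_eq_mul_div] using integral_gaussian_Ioi (1 / 2)

lemma stdCdf_eq_half_add (h : ℝ) : stdCdf h = 1 / 2 + (√(2 * π))⁻¹ * gaussPrimitive h := by
  have hsplit := integral_Iic_sub_Iic (μ := volume)
    (integrable_exp_neg_sq_div_two.integrableOn (s := Iic 0))
    (integrable_exp_neg_sq_div_two.integrableOn (s := Iic h))
  rw [integral_Iic_zero_exp_neg_sq_div_two] at hsplit
  have hpos : 0 < √(2 * π) := by positivity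
  simp only [stdCdf, stdPdf, MeasureTheory.integral_const_mul, gaussPrimitive, ← hsplit]
  field_simp
  ring

lemma hasDerivAt_exp_neg_sq_mul_div (c h : ℝ) (hc : c ≠ 0) :
    HasDerivAt (fun h => exp (-h ^ 2 * c / 2) / c) (-h * exp (-h ^ 2 * c / 2)) h := by
  refine ((((hasDerivAt_pow 2 h).fun_neg.mul_const c).div_const 2).exp.div_const c).congr_deriv ?_
  field_simp
  ring

lemma hasDerivAt_integral_exp_neg_sq_mul_div (a h₀ : ℝ) :
    HasDerivAt (fun h => ∫ x in (0 : ℝ)..a, exp (-h ^ 2 * (1 + x ^ 2) / 2) / (1 + x ^ 2))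
      (∫ x in (0 : ℝ)..a, -h₀ * exp (-h₀ ^ 2 * (1 + x ^ 2) / 2)) h₀ := by
  refine (hasDerivAt_integral_of_dominated_loc_of_deriv_le (bound := fun _ => |h₀| + 1)
    (Metric.ball_mem_nhds h₀ one_pos) (.of_forall fun h => ?_) ?_ ?_ (.of_forall ?_) ?_
    (.of_forall fun x _ h _ => hasDerivAt_exp_neg_sq_mul_div _ h (by positivity))).2
  · exact (Continuous.aestronglyMeasurable (by fun_prop (disch := intro; positivity)))
  · exact Continuous.intervalIntegrable (by fun_prop (disch := intro; positivity)) _ _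
  · exact Continuous.aestronglyMeasurable (by fun_prop)
  · intro x _ h hball
    have hh : |h| ≤ |h₀| + 1 := by
      have := abs_sub_abs_le_abs_sub h h₀
      rw [Metric.mem_ball, dist_eq] at hball
      linarith
    have he : exp (-h ^ 2 * (1 + x ^ 2) / 2) ≤ 1 :=
      exp_le_one_iff.mpr (by nlinarith [sq_nonneg h, sq_nonneg (h * x)])
    rw [norm_mul, norm_neg, norm_of_nonneg (exp_pos _).le, norm_eq_abs]
    exact (mul_le_of_le_one_right (abs_nonneg h) he).trans hh
  · exact intervalIntegrable_const

lemma integral_neg_mul_exp_neg_sq_mul (a h : ℝ) :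
    ∫ x in (0 : ℝ)..a, -h * exp (-h ^ 2 * (1 + x ^ 2) / 2)
      = -exp (-h ^ 2 / 2) * gaussPrimitive (a * h) := by
  have hsubst : ∫ x in (0 : ℝ)..a, h * exp (-(h * x) ^ 2 / 2) = gaussPrimitive (a * h) := by
    simpa [gaussPrimitive, mul_comm a] using
      smul_integral_comp_mul_left (fun u => exp (-u ^ 2 / 2)) h (a := 0) (b := a)
  rw [← hsubst, ← intervalIntegral.integral_const_mul]
  refine integral_congr fun x _ => ?_
  rw [show -h ^ 2 * (1 + x ^ 2) / 2 = -h ^ 2 / 2 + -(h * x) ^ 2 / 2 by ring, exp_add]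
  ring

lemma hasDerivAt_owenT_left (a h : ℝ) :
    HasDerivAt (fun h => owenT h a) (-(2 * π)⁻¹ * exp (-h ^ 2 / 2) * gaussPrimitive (a * h)) h := by
  have := (hasDerivAt_integral_exp_neg_sq_mul_div a h).const_mul (2 * π)⁻¹
  rw [integral_neg_mul_exp_neg_sq_mul] at this
  exact this.congr_deriv (by ring)

lemma owenT_zero_left (a : ℝ) : owenT 0 a = arctan a / (2 * π) := by
  simp [owenT, div_eq_inv_mul]

lemma owenT_one_eq (h : ℝ) : owenT h 1 = 1 / 8 - gaussPrimitive h ^ 2 / (4 * π) := by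
  let D : ℝ → ℝ := fun h => owenT h 1 + gaussPrimitive h ^ 2 / (4 * π)
  have hD : ∀ x, HasDerivAt D 0 x := fun x => by
    refine ((hasDerivAt_owenT_left 1 x).add
      (((hasDerivAt_gaussPrimitive x).pow 2).div_const (4 * π))).congr_deriv ?_
    field_simp
    ring
  have hconst : D h = D 0 :=
    is_const_of_deriv_eq_zero (fun x => (hD x).differentiableAt) (fun x => (hD x).deriv) h 0
  have h0 : D 0 = 1 / 8 := by
    simp only [D, owenT_zero_left, arctan_one, gaussPrimitive, integral_same]
    field_simp
    ring
  linarith [hconst.trans h0]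

theorem stmt_15 (h : ℝ) : owenT h 1 = (1 / 2) * stdCdf h * (1 - stdCdf h) := by
  have hsq : √(2 * π) ^ 2 = 2 * π := sq_sqrt (by positivity)
  have hpos : 0 < √(2 * π) := by positivity
  rw [owenT_one_eq, stdCdf_eq_half_add, show (4 : ℝ) * π = 2 * √(2 * π) ^ 2 by rw [hsq]; ring]
  field_simp
  ring
end

section
/- Let Z = BvN(a, b; ρ) be the standard bivariate normal CDF. Then for fixed a, b, the function ρ ↦ BvN(a,b;ρ) is monotonically nondecreasing in ρ on (−1,1), with ∂BvN(a,b;ρ)/∂ρ = φ₂(a,b;ρ), the standard bivariate normal density at (a,b) with correlation ρ (Plackett's identity). -/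
open MeasureTheory Real

/-!
Differentiating the density in the correlation gives its mixed second derivative in the space
variables, `∂φ₂/∂ρ = ∂²φ₂/∂x∂y`. For `|r| ≤ ρ₀ < 1` the density times any factor of size
`(1 + 2x²)(1 + 2y²)` is dominated by one integrable Gaussian, so `BvN(a, b; ·)` can be differentiated
under the integral; integrating `∂²φ₂/∂x∂y` over `(-∞, a] × (-∞, b]` by the fundamental theorem of
calculus, first in `y` and then in `x`, leaves `φ₂(a, b)` because the boundary terms at `-∞` vanish.
Monotonicity follows from `φ₂ > 0`.
-/

open Filter Set Topology

theorem setIntegral_Iic_prod_Iic_eq_of_hasDerivAt {F F₁ F₁₂ : ℝ → ℝ → ℝ} {a b : ℝ}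
    (hF : ∀ x, HasDerivAt (fun s => F s b) (F₁ x b) x)
    (hF₁ : ∀ x y, HasDerivAt (F₁ x) (F₁₂ x y) y)
    (hF_bot : Tendsto (fun x => F x b) atBot (𝓝 0))
    (hF₁_bot : ∀ x, Tendsto (F₁ x) atBot (𝓝 0))
    (hF₁_int : IntegrableOn (fun x => F₁ x b) (Iic a))
    (hF₁₂_int : IntegrableOn (fun p : ℝ × ℝ => F₁₂ p.1 p.2) (Iic a ×ˢ Iic b)) :
    ∫ p in Iic a ×ˢ Iic b, F₁₂ p.1 p.2 = F a b := by
  rw [Measure.volume_eq_prod] at hF₁₂_int ⊢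
  have h_sections : ∀ᵐ x ∂volume.restrict (Iic a), IntegrableOn (F₁₂ x) (Iic b) := by
    rw [IntegrableOn, ← Measure.prod_restrict] at hF₁₂_int
    exact hF₁₂_int.prod_right_ae
  calc ∫ p in Iic a ×ˢ Iic b, F₁₂ p.1 p.2 ∂volume.prod volume
      = ∫ x in Iic a, ∫ y in Iic b, F₁₂ x y := setIntegral_prod _ hF₁₂_int
    _ = ∫ x in Iic a, F₁ x b := integral_congr_ae <| h_sections.mono fun x hx => by
        simpa using integral_Iic_of_hasDerivAt_of_tendsto' (fun y _ => hF₁ x y) hx (hF₁_bot x)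
    _ = F a b := by
        simpa using integral_Iic_of_hasDerivAt_of_tendsto' (fun x _ => hF x) hF₁_int hF_bot

lemma tendsto_exp_neg_mul_sq_atBot {c : ℝ} (hc : 0 < c) :
    Tendsto (fun t => exp (-c * t ^ 2)) atBot (𝓝 0) := by
  simpa using (tendsto_rpow_abs_mul_exp_neg_mul_sq_cocompact hc 0).mono_left atBot_le_cocompact

lemma one_add_two_sq_mul_exp_le {c : ℝ} (hc : 0 < c) (t : ℝ) :
    (1 + 2 * t ^ 2) * exp (-c * t ^ 2) ≤ (1 + 4 / c) * exp (-(c / 2) * t ^ 2) := by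
  have h : 1 + 2 * t ^ 2 ≤ (1 + 4 / c) * exp (c / 2 * t ^ 2) := by
    have he := add_one_le_exp (c / 2 * t ^ 2)
    rw [show 1 + 4 / c = (c + 4) / c by field_simp, div_mul_eq_mul_div, le_div_iff₀ hc]
    nlinarith [mul_le_mul_of_nonneg_left he (by linarith : (0 : ℝ) ≤ c + 4),
      mul_nonneg hc.le (sq_nonneg t)]
  calc (1 + 2 * t ^ 2) * exp (-c * t ^ 2)
      ≤ (1 + 4 / c) * exp (c / 2 * t ^ 2) * exp (-c * t ^ 2) := by gcongr
    _ = (1 + 4 / c) * exp (-(c / 2) * t ^ 2) := by rw [mul_assoc, ← exp_add]; ring_nf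

noncomputable def bvnPdfDx (r x y : ℝ) : ℝ := bvnPdf r x y * ((r * y - x) / (1 - r ^ 2))

noncomputable def bvnPdfDxy (r x y : ℝ) : ℝ :=
  bvnPdf r x y * (((r * x - y) * (r * y - x) + r * (1 - r ^ 2)) / (1 - r ^ 2) ^ 2)

section Derivatives

variable {r : ℝ} (hr : |r| < 1) (x y : ℝ)
include hr

lemma hasDerivAt_bvnPdf_fst : HasDerivAt (fun t => bvnPdf r t y) (bvnPdfDx r x y) x := by
  have : 0 < 1 - r ^ 2 := sub_pos.2 ((sq_lt_one_iff_abs_lt_one r).2 hr)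
  have hq : HasDerivAt (fun t => t ^ 2 - 2 * r * t * y + y ^ 2) (2 * x - 2 * r * y) x :=
    (((hasDerivAt_pow 2 x).sub (((hasDerivAt_id' x).const_mul (2 * r)).mul_const y)).add_const
      (y ^ 2)).congr_deriv (by ring)
  refine (hq.neg.div_const (2 * (1 - r ^ 2))).exp.div_const (2 * π * √(1 - r ^ 2))
    |>.congr_deriv ?_
  simp only [bvnPdfDx, bvnPdf, Pi.neg_apply]
  field_simp
  ring

lemma hasDerivAt_bvnPdfDx_snd : HasDerivAt (fun t => bvnPdfDx r x t) (bvnPdfDxy r x y) y := by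
  have : 0 < 1 - r ^ 2 := sub_pos.2 ((sq_lt_one_iff_abs_lt_one r).2 hr)
  have hq : HasDerivAt (fun t => x ^ 2 - 2 * r * x * t + t ^ 2) (2 * y - 2 * r * x) y :=
    ((((hasDerivAt_id' y).const_mul (2 * r * x))).const_sub (x ^ 2)).add
      (hasDerivAt_pow 2 y) |>.congr_deriv (by ring)
  have hl : HasDerivAt (fun t => (r * t - x) / (1 - r ^ 2)) (r / (1 - r ^ 2)) y :=
    (((hasDerivAt_id' y).const_mul r).sub_const x).div_const (1 - r ^ 2) |>.congr_deriv (by ring)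
  refine ((hq.neg.div_const (2 * (1 - r ^ 2))).exp.div_const (2 * π * √(1 - r ^ 2))).mul hl
    |>.congr_deriv ?_
  simp only [bvnPdfDxy, bvnPdf, Pi.neg_apply]
  field_simp
  ring

lemma hasDerivAt_bvnPdf_corr : HasDerivAt (fun t => bvnPdf t x y) (bvnPdfDxy r x y) r := by
  have hpos : 0 < 1 - r ^ 2 := sub_pos.2 ((sq_lt_one_iff_abs_lt_one r).2 hr)
  have hd : HasDerivAt (fun t => 1 - t ^ 2) (-(2 * r)) r :=
    ((hasDerivAt_pow 2 r).const_sub 1).congr_deriv (by ring)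
  have hq : HasDerivAt (fun t => x ^ 2 - 2 * t * x * y + y ^ 2) (-(2 * x * y)) r :=
    ((((hasDerivAt_id' r).const_mul 2).mul_const x).mul_const y).const_sub (x ^ 2) |>.add_const
      (y ^ 2) |>.congr_deriv (by ring)
  refine (hq.neg.div (hd.const_mul 2) (by positivity)).exp.div
    ((hd.sqrt hpos.ne').const_mul (2 * π)) (by positivity) |>.congr_deriv ?_
  simp only [bvnPdfDxy, bvnPdf, Pi.neg_apply, Pi.div_apply]
  field_simp
  linear_combination (r ^ 3 - r) * sq_sqrt hpos.le

end Derivatives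

noncomputable def bvnEnvelope (ρ₀ x y : ℝ) : ℝ :=
  (2 * π * √(1 - ρ₀ ^ 2))⁻¹ * (1 + 8 / (1 - ρ₀)) ^ 2 *
    (exp (-((1 - ρ₀) / 4) * x ^ 2) * exp (-((1 - ρ₀) / 4) * y ^ 2))

section Bounds

variable {ρ₀ r : ℝ} (hρ₀ : ρ₀ < 1) (hr : |r| ≤ ρ₀)
include hρ₀ hr

lemma bvnPdf_le_mul_exp_mul_exp (x y : ℝ) :
    bvnPdf r x y ≤ (2 * π * √(1 - ρ₀ ^ 2))⁻¹ *
      (exp (-((1 - ρ₀) / 2) * x ^ 2) * exp (-((1 - ρ₀) / 2) * y ^ 2)) := by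
  obtain ⟨hr₁, hr₂⟩ := abs_le.mp hr
  have hρ₀_sq : 0 < 1 - ρ₀ ^ 2 := by nlinarith
  have hr_sq : r ^ 2 ≤ ρ₀ ^ 2 := sq_le_sq' hr₁ hr₂
  have hquad : (1 - ρ₀) * (x ^ 2 + y ^ 2) ≤ x ^ 2 - 2 * r * x * y + y ^ 2 := by
    nlinarith [mul_nonneg (sub_nonneg.2 hr₂) (sq_nonneg (x + y)),
      mul_nonneg (by linarith : (0 : ℝ) ≤ ρ₀ + r) (sq_nonneg (x - y))]
  have hexp : -(x ^ 2 - 2 * r * x * y + y ^ 2) / (2 * (1 - r ^ 2)) ≤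
      -((1 - ρ₀) / 2) * x ^ 2 + -((1 - ρ₀) / 2) * y ^ 2 := by
    rw [neg_div, neg_le, le_div_iff₀ (by nlinarith)]
    nlinarith [mul_nonneg (sq_nonneg r) (by nlinarith : 0 ≤ (1 - ρ₀) * (x ^ 2 + y ^ 2))]
  rw [← exp_add, inv_mul_eq_div, bvnPdf]
  gcongr

lemma abs_bvnPdf_mul_le {x y q M : ℝ} (hq : |q| ≤ M * ((1 + 2 * x ^ 2) * (1 + 2 * y ^ 2))) :
    |bvnPdf r x y * q| ≤ M * bvnEnvelope ρ₀ x y := by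
  have hc : 0 < (1 - ρ₀) / 2 := by linarith
  have hpdf := bvnPdf_le_mul_exp_mul_exp hρ₀ hr x y
  have hpdf_pos : 0 ≤ bvnPdf r x y := by unfold bvnPdf; positivity
  have hM : 0 ≤ M := nonneg_of_mul_nonneg_left ((abs_nonneg q).trans hq) (by positivity)
  calc |bvnPdf r x y * q| = bvnPdf r x y * |q| := by rw [abs_mul, abs_of_nonneg hpdf_pos]
    _ ≤ (2 * π * √(1 - ρ₀ ^ 2))⁻¹ *
          (exp (-((1 - ρ₀) / 2) * x ^ 2) * exp (-((1 - ρ₀) / 2) * y ^ 2)) *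
          (M * ((1 + 2 * x ^ 2) * (1 + 2 * y ^ 2))) := by gcongr
    _ = M * (2 * π * √(1 - ρ₀ ^ 2))⁻¹ *
          (((1 + 2 * x ^ 2) * exp (-((1 - ρ₀) / 2) * x ^ 2)) *
            ((1 + 2 * y ^ 2) * exp (-((1 - ρ₀) / 2) * y ^ 2))) := by ring
    _ ≤ M * (2 * π * √(1 - ρ₀ ^ 2))⁻¹ *
          (((1 + 4 / ((1 - ρ₀) / 2)) * exp (-((1 - ρ₀) / 2 / 2) * x ^ 2)) *
            ((1 + 4 / ((1 - ρ₀) / 2)) * exp (-((1 - ρ₀) / 2 / 2) * y ^ 2))) := by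
        gcongr _ * (?_ * ?_) <;> exact one_add_two_sq_mul_exp_le hc _
    _ = M * bvnEnvelope ρ₀ x y := by
        rw [bvnEnvelope, show 4 / ((1 - ρ₀) / 2) = 8 / (1 - ρ₀) by field_simp; ring,
          show (1 - ρ₀) / 2 / 2 = (1 - ρ₀) / 4 by ring]
        ring

lemma abs_bvnPdf_le (x y : ℝ) : |bvnPdf r x y| ≤ bvnEnvelope ρ₀ x y := by
  simpa using abs_bvnPdf_mul_le hρ₀ hr (q := 1) (M := 1) (by
    rw [abs_one, one_mul]
    nlinarith [sq_nonneg x, sq_nonneg y, mul_nonneg (sq_nonneg x) (sq_nonneg y)])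

lemma abs_bvnPdfDx_le (x y : ℝ) :
    |bvnPdfDx r x y| ≤ (1 - ρ₀ ^ 2)⁻¹ * bvnEnvelope ρ₀ x y := by
  obtain ⟨hr₁, hr₂⟩ := abs_le.mp hr
  have hρ₀_sq : 0 < 1 - ρ₀ ^ 2 := by nlinarith
  have hr_sq : 0 < 1 - r ^ 2 := by nlinarith
  refine abs_bvnPdf_mul_le hρ₀ hr ?_
  rw [abs_div, abs_of_pos hr_sq, div_eq_inv_mul]
  gcongr ?_ * ?_
  · exact inv_anti₀ hρ₀_sq (by nlinarith)
  · rw [abs_le]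
    constructor <;> nlinarith [sq_nonneg (x - 1/4), sq_nonneg (y - 1/4), sq_nonneg (x + 1/4),
      sq_nonneg (y + 1/4), mul_nonneg (sq_nonneg x) (sq_nonneg y)]

lemma abs_bvnPdfDxy_le (x y : ℝ) :
    |bvnPdfDxy r x y| ≤ ((1 - ρ₀ ^ 2) ^ 2)⁻¹ * bvnEnvelope ρ₀ x y := by
  obtain ⟨hr₁, hr₂⟩ := abs_le.mp hr
  have hρ₀_sq : 0 < 1 - ρ₀ ^ 2 := by nlinarith
  have hr_sq : 0 < 1 - r ^ 2 := by nlinarith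
  refine abs_bvnPdf_mul_le hρ₀ hr ?_
  rw [abs_div, abs_of_pos (by positivity : (0 : ℝ) < (1 - r ^ 2) ^ 2), div_eq_inv_mul]
  gcongr ?_ * ?_
  · exact inv_anti₀ (by positivity) (pow_le_pow_left₀ hρ₀_sq.le (by nlinarith) 2)
  have h₁ : |r * x - y| ≤ |x| + |y| := (abs_sub _ _).trans (by
    rw [abs_mul]; nlinarith [abs_nonneg r, abs_nonneg x])
  have h₂ : |r * y - x| ≤ |x| + |y| := (abs_sub _ _).trans (by
    rw [abs_mul]; nlinarith [abs_nonneg r, abs_nonneg y])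
  have h₃ : |r * (1 - r ^ 2)| ≤ 1 := by
    rw [abs_mul, abs_of_pos hr_sq]; nlinarith [abs_nonneg r, sq_nonneg r]
  calc |(r * x - y) * (r * y - x) + r * (1 - r ^ 2)|
      ≤ |r * x - y| * |r * y - x| + |r * (1 - r ^ 2)| := by rw [← abs_mul]; exact abs_add_le _ _
    _ ≤ (|x| + |y|) * (|x| + |y|) + 1 := by gcongr
    _ ≤ (1 + 2 * x ^ 2) * (1 + 2 * y ^ 2) := by
        nlinarith [sq_abs x, sq_abs y, sq_nonneg (|x| - |y|), sq_nonneg (2 * |x| * |y| - 1),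
          abs_nonneg x, abs_nonneg y]

end Bounds

section Envelope

variable {ρ₀ : ℝ} (hρ₀ : ρ₀ < 1)
include hρ₀

lemma integrable_bvnEnvelope : Integrable (fun p : ℝ × ℝ => bvnEnvelope ρ₀ p.1 p.2) := by
  have h := integrable_exp_neg_mul_sq (by linarith : 0 < (1 - ρ₀) / 4)
  rw [Measure.volume_eq_prod]
  exact (h.mul_prod h).const_mul _

lemma integrable_bvnEnvelope_left (y : ℝ) : Integrable (fun x => bvnEnvelope ρ₀ x y) :=
  ((integrable_exp_neg_mul_sq (by linarith : 0 < (1 - ρ₀) / 4)).mul_const _).const_mul _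

lemma tendsto_bvnEnvelope_left_atBot (y : ℝ) :
    Tendsto (fun x => bvnEnvelope ρ₀ x y) atBot (𝓝 0) := by
  have h := ((tendsto_exp_neg_mul_sq_atBot (by linarith : 0 < (1 - ρ₀) / 4)).mul_const
    (exp (-((1 - ρ₀) / 4) * y ^ 2))).const_mul
      ((2 * π * √(1 - ρ₀ ^ 2))⁻¹ * (1 + 8 / (1 - ρ₀)) ^ 2)
  rwa [zero_mul, mul_zero] at h

lemma tendsto_bvnEnvelope_right_atBot (x : ℝ) :
    Tendsto (fun y => bvnEnvelope ρ₀ x y) atBot (𝓝 0) := by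
  have h := ((tendsto_exp_neg_mul_sq_atBot (by linarith : 0 < (1 - ρ₀) / 4)).const_mul
    (exp (-((1 - ρ₀) / 4) * x ^ 2))).const_mul
      ((2 * π * √(1 - ρ₀ ^ 2))⁻¹ * (1 + 8 / (1 - ρ₀)) ^ 2)
  rwa [mul_zero, mul_zero] at h

end Envelope

lemma continuous_bvnPdf (r : ℝ) : Continuous fun p : ℝ × ℝ => bvnPdf r p.1 p.2 := by
  unfold bvnPdf; fun_prop

lemma continuous_bvnPdfDx (r : ℝ) : Continuous fun p : ℝ × ℝ => bvnPdfDx r p.1 p.2 := by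
  unfold bvnPdfDx; exact (continuous_bvnPdf r).mul (by fun_prop)

lemma continuous_bvnPdfDxy (r : ℝ) : Continuous fun p : ℝ × ℝ => bvnPdfDxy r p.1 p.2 := by
  unfold bvnPdfDxy; exact (continuous_bvnPdf r).mul (by fun_prop)

theorem setIntegral_Iic_prod_Iic_bvnPdfDxy {ρ : ℝ} (hρ : |ρ| < 1) (a b : ℝ) :
    ∫ p in Iic a ×ˢ Iic b, bvnPdfDxy ρ p.1 p.2 = bvnPdf ρ a b := by
  have hDx_bot (x : ℝ) : Tendsto (bvnPdfDx ρ x) atBot (𝓝 0) := by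
    have h := (tendsto_bvnEnvelope_right_atBot hρ x).const_mul (1 - |ρ| ^ 2)⁻¹
    rw [mul_zero] at h
    exact squeeze_zero_norm (fun y => abs_bvnPdfDx_le hρ le_rfl x y) h
  have hDx_int : Integrable (fun x => bvnPdfDx ρ x b) :=
    ((integrable_bvnEnvelope_left hρ b).const_mul _).mono'
      ((continuous_bvnPdfDx ρ).comp (continuous_id.prodMk continuous_const)).aestronglyMeasurable
      (.of_forall fun x => abs_bvnPdfDx_le hρ le_rfl x b)
  have hDxy_int : Integrable (fun p : ℝ × ℝ => bvnPdfDxy ρ p.1 p.2) :=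
    ((integrable_bvnEnvelope hρ).const_mul _).mono' (continuous_bvnPdfDxy ρ).aestronglyMeasurable
      (.of_forall fun p => abs_bvnPdfDxy_le hρ le_rfl p.1 p.2)
  exact setIntegral_Iic_prod_Iic_eq_of_hasDerivAt (fun x => hasDerivAt_bvnPdf_fst hρ x b)
    (hasDerivAt_bvnPdfDx_snd hρ)
    (squeeze_zero_norm (fun x => abs_bvnPdf_le hρ le_rfl x b)
      (tendsto_bvnEnvelope_left_atBot hρ b))
    hDx_bot hDx_int.integrableOn hDxy_int.integrableOn

theorem hasDerivAt_bvn {ρ : ℝ} (hρ : |ρ| < 1) (a b : ℝ) :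
    HasDerivAt (fun r => bvn a b r) (bvnPdf ρ a b) ρ := by
  set ρ₀ := (1 + |ρ|) / 2 with hρ₀_def
  have hρ₀ : ρ₀ < 1 := by linarith
  have hball : ∀ r ∈ Metric.ball ρ ((1 - |ρ|) / 2), |r| ≤ ρ₀ := fun r hr => by
    rw [Metric.mem_ball, Real.dist_eq] at hr
    linarith [abs_sub_abs_le_abs_sub r ρ]
  have hρ_ball : ρ ∈ Metric.ball ρ ((1 - |ρ|) / 2) := Metric.mem_ball_self (by linarith)
  obtain ⟨-, hderiv⟩ := hasDerivAt_integral_of_dominated_loc_of_deriv_le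
    (μ := volume.restrict (Iic a ×ˢ Iic b)) (F' := fun r p => bvnPdfDxy r p.1 p.2)
    (bound := fun p => ((1 - ρ₀ ^ 2) ^ 2)⁻¹ * bvnEnvelope ρ₀ p.1 p.2)
    (Metric.isOpen_ball.mem_nhds hρ_ball)
    (.of_forall fun r => (continuous_bvnPdf r).aestronglyMeasurable)
    ((integrable_bvnEnvelope hρ₀).restrict.mono' (continuous_bvnPdf ρ).aestronglyMeasurable
      (.of_forall fun p => abs_bvnPdf_le hρ₀ (hball ρ hρ_ball) p.1 p.2))
    (continuous_bvnPdfDxy ρ).aestronglyMeasurable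
    (.of_forall fun p r hr => abs_bvnPdfDxy_le hρ₀ (hball r hr) p.1 p.2)
    ((integrable_bvnEnvelope hρ₀).const_mul _).restrict
    (.of_forall fun p r hr => hasDerivAt_bvnPdf_corr (by linarith [hball r hr]) p.1 p.2)
  rwa [setIntegral_Iic_prod_Iic_bvnPdfDxy hρ] at hderiv

theorem stmt_19 (a b : ℝ) :
    MonotoneOn (fun ρ => bvn a b ρ) (Set.Ioo (-1 : ℝ) 1) ∧
    ∀ ρ ∈ Set.Ioo (-1 : ℝ) 1, HasDerivAt (fun r => bvn a b r) (bvnPdf ρ a b) ρ := by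
  have hderiv (ρ : ℝ) (hρ : ρ ∈ Ioo (-1 : ℝ) 1) : HasDerivAt (fun r => bvn a b r) (bvnPdf ρ a b) ρ :=
    hasDerivAt_bvn (abs_lt.2 hρ) a b
  refine ⟨monotoneOn_of_deriv_nonneg (convex_Ioo _ _)
    (fun ρ hρ => (hderiv ρ hρ).continuousAt.continuousWithinAt)
    (fun ρ hρ => (hderiv ρ (interior_subset hρ)).differentiableAt.differentiableWithinAt)
    (fun ρ hρ => ?_), hderiv⟩
  rw [(hderiv ρ (interior_subset hρ)).deriv, bvnPdf]
  positivity
end
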